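/- The multiset of 5 triples {1,2,3}, {1,2,4}, {1,3,4}, {2,3,4}, {5,6,7} is fair and non-special, yet it does not admit a nice two-coloring. -/

import Mathlib

/-- `f` is a *nice (total) `c`-coloring* of the multiset `T` of tuples: the color
classes `f j` sum to `T`, and for each color `j` and every element `i` appearing in
some tuple of `T` there is a tuple of color `j` not containing `i`. -/
def NiceColoring (c : ℕ) (T : Multiset (Finset ℕ+))
    (f : Fin c → Multiset (Finset ℕ+)) : Prop :=
  (∑ j, f j) = T ∧
  ∀ j : Fin c, ∀ i : ℕ+, (∃ t ∈ T, i ∈ t) → ∃ t ∈ f j, i ∉ t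

/-- `T` is *`c`-fair*: every element appearing in some tuple of `T` is absent from at
least `c` of the tuples (counted with multiplicity). -/
def CFair (c : ℕ) (T : Multiset (Finset ℕ+)) : Prop :=
  ∀ i : ℕ+, (∃ t ∈ T, i ∈ t) →
    c ≤ Multiset.card (T.filter (fun t => i ∉ t))

/-- A multiset `T` of `n` triples is *special*: for some three distinct elements
`a, b, c` it consists of `n - 3` copies of the triple `{a, b, c}` together with three
further triples, one containing `a`, one containing `b` and one containing `c`, whose
other elements are distinct from `a`, `b`, `c`. -/
def Special (T : Multiset (Finset ℕ+)) : Prop :=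
  ∃ a b c : ℕ+, a ≠ b ∧ a ≠ c ∧ b ≠ c ∧
    ∃ t₁ t₂ t₃ : Finset ℕ+,
      T = Multiset.replicate (Multiset.card T - 3) {a, b, c} + {t₁, t₂, t₃} ∧
      a ∈ t₁ ∧ b ∉ t₁ ∧ c ∉ t₁ ∧
      a ∉ t₂ ∧ b ∈ t₂ ∧ c ∉ t₂ ∧
      a ∉ t₃ ∧ b ∉ t₃ ∧ c ∈ t₃

/-- The multiset of 5 triples `{1,2,3}, {1,2,4}, {1,3,4}, {2,3,4}, {5,6,7}`. -/
def exampleFive : Multiset (Finset ℕ+) :=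
  {{1, 2, 3}, {1, 2, 4}, {1, 3, 4}, {2, 3, 4}, {5, 6, 7}}

/-!
Each `i ∈ {1, 2, 3, 4}` is avoided only by the triples `{1, 2, 3, 4} \ {i}` and `{5, 6, 7}`, all
five triples being distinct. Hence the colour class without `{5, 6, 7}` must contain the four
triples inside `{1, 2, 3, 4}`, and the other class consists of `{5, 6, 7}` alone, so no triple
of it avoids `5`. A special multiset of at least five triples repeats `{a, b, c}`, which rules
out specialness here.
-/

theorem cFair_iff {c : ℕ} {T : Multiset (Finset ℕ+)} :
    CFair c T ↔ ∀ t ∈ T, ∀ i ∈ t, c ≤ Multiset.card (T.filter (fun t => i ∉ t)) := by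
  refine ⟨fun h t ht i hi => h i ⟨t, ht, hi⟩, ?_⟩
  rintro h i ⟨t, ht, hi⟩
  exact h t ht i hi

theorem Special.not_nodup {T : Multiset (Finset ℕ+)} (hT : Special T)
    (hcard : 5 ≤ Multiset.card T) : ¬ T.Nodup := by
  obtain ⟨a, b, c, -, -, -, t₁, t₂, t₃, hT, -⟩ := hT
  intro hnd
  have hle : Multiset.replicate 2 ({a, b, c} : Finset ℕ+) ≤ T :=
    calc Multiset.replicate 2 {a, b, c}
        ≤ Multiset.replicate (Multiset.card T - 3) {a, b, c} :=
          (Multiset.replicate_le_replicate _).mpr (by omega)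
      _ ≤ Multiset.replicate (Multiset.card T - 3) {a, b, c} + {t₁, t₂, t₃} :=
          le_add_right le_rfl
      _ = T := hT.symm
  simpa using Multiset.nodup_of_le hle hnd

namespace NiceColoring

variable {c : ℕ} {T : Multiset (Finset ℕ+)} {f : Fin c → Multiset (Finset ℕ+)}

theorem comp_perm (hf : NiceColoring c T f) (σ : Equiv.Perm (Fin c)) :
    NiceColoring c T (f ∘ σ) :=
  ⟨(Equiv.sum_comp σ f).trans hf.1, fun j => hf.2 (σ j)⟩

theorem count_add_count_le (hf : NiceColoring c T f) {j k : Fin c} (hjk : j ≠ k)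
    (t : Finset ℕ+) : (f j).count t + (f k).count t ≤ T.count t := by
  rw [← hf.1, Multiset.count_sum', ← Finset.sum_pair hjk (f := fun j => (f j).count t)]
  exact Finset.sum_le_sum_of_subset (Finset.subset_univ _)

theorem mem_of_mem (hf : NiceColoring c T f) {j : Fin c} {t : Finset ℕ+} (ht : t ∈ f j) :
    t ∈ T := by
  rw [← hf.1]
  exact Multiset.mem_sum.mpr ⟨j, Finset.mem_univ _, ht⟩

theorem notMem_of_mem (hf : NiceColoring c T f) (hT : T.Nodup) {j k : Fin c} (hjk : j ≠ k)
    {t : Finset ℕ+} (ht : t ∈ f j) : t ∉ f k := by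
  intro htk
  have := hf.count_add_count_le hjk t
  have := Multiset.nodup_iff_count_le_one.mp hT t
  rw [← Multiset.one_le_count_iff_mem] at ht htk
  omega

end NiceColoring

theorem exampleFive_nodup : exampleFive.Nodup := by decide

theorem cFair_two_exampleFive : CFair 2 exampleFive := cFair_iff.mpr (by decide)

theorem eq_erase_or_of_notMem_of_mem_exampleFive {i : ℕ+} {t : Finset ℕ+}
    (hi : i ∈ ({1, 2, 3, 4} : Finset ℕ+)) (ht : t ∈ exampleFive) (hit : i ∉ t) :
    t = ({1, 2, 3, 4} : Finset ℕ+).erase i ∨ t = {5, 6, 7} := by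
  have key : ∀ i ∈ ({1, 2, 3, 4} : Finset ℕ+), ∀ t ∈ exampleFive, i ∉ t →
      t = ({1, 2, 3, 4} : Finset ℕ+).erase i ∨ t = {5, 6, 7} := by decide
  exact key i hi t ht hit

theorem exists_eq_erase_of_mem_exampleFive {t : Finset ℕ+} (ht : t ∈ exampleFive)
    (h5 : 5 ∉ t) :
    ∃ i ∈ ({1, 2, 3, 4} : Finset ℕ+), t = ({1, 2, 3, 4} : Finset ℕ+).erase i := by
  revert t; decide

theorem exists_mem_exampleFive_mem {i : ℕ+} (hi : i ∈ ({1, 2, 3, 4, 5} : Finset ℕ+)) :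
    ∃ t ∈ exampleFive, i ∈ t := by
  have key : ∀ i ∈ ({1, 2, 3, 4, 5} : Finset ℕ+), ∃ t ∈ exampleFive.toFinset, i ∈ t := by
    decide
  obtain ⟨t, ht, hit⟩ := key i hi
  exact ⟨t, Multiset.mem_toFinset.mp ht, hit⟩

theorem not_exists_niceColoring_two_exampleFive :
    ¬ ∃ f : Fin 2 → Multiset (Finset ℕ+), NiceColoring 2 exampleFive f := by
  rintro ⟨f, hf⟩
  obtain ⟨g, hg, h567⟩ :
      ∃ g, NiceColoring 2 exampleFive g ∧ ({5, 6, 7} : Finset ℕ+) ∉ g 1 := by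
    by_cases h : ({5, 6, 7} : Finset ℕ+) ∈ f 1
    · exact ⟨f ∘ Equiv.swap 0 1, hf.comp_perm _,
        hf.notMem_of_mem exampleFive_nodup (by decide) h⟩
    · exact ⟨f, hf, h⟩
  have hcompl : ∀ i ∈ ({1, 2, 3, 4} : Finset ℕ+), ({1, 2, 3, 4} : Finset ℕ+).erase i ∈ g 1 := by
    intro i hi
    obtain ⟨t, ht, hit⟩ := hg.2 1 i (exists_mem_exampleFive_mem
      ((by decide : ({1, 2, 3, 4} : Finset ℕ+) ⊆ {1, 2, 3, 4, 5}) hi))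
    rcases eq_erase_or_of_notMem_of_mem_exampleFive hi (hg.mem_of_mem ht) hit with rfl | rfl
    exacts [ht, absurd ht h567]
  obtain ⟨t, ht, h5t⟩ := hg.2 0 5 (exists_mem_exampleFive_mem (by simp))
  obtain ⟨i, hi, rfl⟩ := exists_eq_erase_of_mem_exampleFive (hg.mem_of_mem ht) h5t
  exact hg.notMem_of_mem exampleFive_nodup (by decide) ht (hcompl i hi)

/-- The multiset of 5 triples `{1,2,3}, {1,2,4}, {1,3,4}, {2,3,4}, {5,6,7}` is fair
and non-special, yet it does not admit a nice two-coloring. -/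
theorem exampleFive_fair_nonspecial_no_nice_two_coloring :
    CFair 2 exampleFive ∧ ¬ Special exampleFive ∧
      ¬ ∃ f : Fin 2 → Multiset (Finset ℕ+), NiceColoring 2 exampleFive f :=
  ⟨cFair_two_exampleFive, fun h => h.not_nodup (by decide) exampleFive_nodup,
    not_exists_niceColoring_two_exampleFive⟩
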